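/- Unidimensional turning-point lower bound: let v : Fin k → ℤ be a 1D vector sequence from rest to rest (if k > 0 then |v 0| ≤ 1 and v (k-1) = 0, and |v (i+1) - v i| ≤ 1 for all i), and let s : Fin (k+1) → ℤ be its position sequence, s 0 = 0 and s (t+1) = s t + v t. Let r ≥ 1 and let w : Fin (r+1) → ℤ satisfy w 0 = 0, w (i+1) ≠ w i for all i < r, and (w (i+1) - w i)·(w (i+2) - w (i+1)) < 0 for all i with i + 2 ≤ r (the targets strictly alternate direction). Suppose there is a monotone (nondecreasing) map τ : Fin (r+1) → Fin (k+1) with τ 0 = 0 and s (τ i) = w i for all i. Then k ≥ ∑_{i<r} ⌈2·√(|w (i+1) - w i|)⌉. -/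
import Mathlib

lemma vtsp_mul_abs (σ x : ℤ) (hσ : σ = 1 ∨ σ = -1) : σ * x ≤ |x| := by
  rcases hσ with h | h <;> subst h <;> simp [le_abs_self, neg_le_abs, neg_abs_le]

lemma vtsp_ceil_sqrt_le (d : ℤ) (hd : 0 ≤ d) (T : ℕ) (h : 4 * d ≤ (T : ℤ) ^ 2) :
    ⌈2 * Real.sqrt (d : ℝ)⌉₊ ≤ T := by
  rw [Nat.ceil_le]
  have h0 : (0 : ℝ) ≤ (d : ℝ) := by exact_mod_cast hd
  have hs := Real.sq_sqrt h0
  have hsn := Real.sqrt_nonneg (d : ℝ)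
  have h4 : 4 * (d : ℝ) ≤ (T : ℝ) ^ 2 := by exact_mod_cast h
  by_contra hc
  push_neg at hc
  have hT : (0 : ℝ) ≤ (T : ℝ) := by positivity
  nlinarith

lemma vtsp_last_argmax (f : ℕ → ℤ) (a e : ℕ) (hae : a ≤ e) :
    ∃ b, a ≤ b ∧ b ≤ e ∧ (∀ y, a ≤ y → y ≤ e → f y ≤ f b) ∧
      (∀ y, b < y → y ≤ e → f y < f b) := by
  classical
  have hne : (Finset.Icc a e).Nonempty := ⟨a, by simp [hae]⟩
  obtain ⟨b₀, hb₀, hmax⟩ := Finset.exists_max_image (Finset.Icc a e) f hne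
  have hGne : ((Finset.Icc a e).filter (fun x => ∀ y ∈ Finset.Icc a e, f y ≤ f x)).Nonempty :=
    ⟨b₀, Finset.mem_filter.mpr ⟨hb₀, hmax⟩⟩
  obtain ⟨hbIcc, hbmax⟩ := Finset.mem_filter.mp
    (Finset.max'_mem _ hGne)
  set b := Finset.max' _ hGne with hb
  rw [Finset.mem_Icc] at hbIcc
  refine ⟨b, hbIcc.1, hbIcc.2, fun y hy1 hy2 => hbmax y (Finset.mem_Icc.mpr ⟨hy1, hy2⟩), ?_⟩
  intro y hy1 hy2
  have hyIcc : y ∈ Finset.Icc a e := Finset.mem_Icc.mpr ⟨le_trans hbIcc.1 (le_of_lt hy1), hy2⟩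
  rcases lt_or_eq_of_le (hbmax y hyIcc) with h | h
  · exact h
  · exfalso
    have hyG : y ∈ (Finset.Icc a e).filter (fun x => ∀ y ∈ Finset.Icc a e, f y ≤ f x) :=
      Finset.mem_filter.mpr ⟨hyIcc, fun z hz => h ▸ hbmax z hz⟩
    have := Finset.le_max' _ y hyG
    omega

lemma vtsp_vel_up (V : ℕ → ℤ) (hV : ∀ t, |V (t + 1) - V t| ≤ 1) (σ : ℤ)
    (hσ : σ = 1 ∨ σ = -1) (a : ℕ) (h0 : σ * V a ≤ 1) :
    ∀ j : ℕ, σ * V (a + j) ≤ 1 + j := by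
  intro j
  induction j with
  | zero => simpa using h0
  | succ n ih =>
    have h1 := vtsp_mul_abs σ (V (a + n + 1) - V (a + n)) hσ
    have h2 := hV (a + n)
    have : a + (n + 1) = a + n + 1 := by omega
    rw [this]
    push_cast
    push_cast at ih
    nlinarith [mul_sub σ (V (a + n + 1)) (V (a + n))]

lemma vtsp_vel_down (V : ℕ → ℤ) (hV : ∀ t, |V (t + 1) - V t| ≤ 1) (σ : ℤ)
    (hσ : σ = 1 ∨ σ = -1) (b : ℕ) (h0 : σ * V b ≤ 0) :
    ∀ j : ℕ, σ * V (b - j) ≤ j := by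
  intro j
  induction j with
  | zero => simpa using h0
  | succ n ih =>
    by_cases hbn : n < b
    · have heq : b - n = b - (n + 1) + 1 := by omega
      have h1 := vtsp_mul_abs σ (V (b - (n + 1)) - V (b - (n + 1) + 1)) hσ
      have h2 := hV (b - (n + 1))
      have h2' : |V (b - (n + 1)) - V (b - (n + 1) + 1)| = |V (b - (n + 1) + 1) - V (b - (n + 1))| :=
        abs_sub_comm _ _
      rw [heq] at ih
      push_cast
      push_cast at ih
      nlinarith [mul_sub σ (V (b - (n + 1))) (V (b - (n + 1) + 1))]
    · have heq : b - (n + 1) = b - n := by omega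
      rw [heq]
      push_cast
      push_cast at ih
      linarith

lemma vtsp_pos_up (S V : ℕ → ℤ) (hSV : ∀ t, S (t + 1) = S t + V t)
    (hV : ∀ t, |V (t + 1) - V t| ≤ 1) (σ : ℤ) (hσ : σ = 1 ∨ σ = -1)
    (a : ℕ) (h0 : σ * V a ≤ 1) :
    ∀ j : ℕ, 2 * (σ * (S (a + j) - S a)) ≤ j * (j + 1) := by
  intro j
  induction j with
  | zero => simp
  | succ n ih =>
    have hv := vtsp_vel_up V hV σ hσ a h0 n
    have : a + (n + 1) = (a + n) + 1 := by omega
    rw [this, hSV (a + n)]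
    push_cast
    push_cast at ih hv
    nlinarith

lemma vtsp_pos_down (S V : ℕ → ℤ) (hSV : ∀ t, S (t + 1) = S t + V t)
    (hV : ∀ t, |V (t + 1) - V t| ≤ 1) (σ : ℤ) (hσ : σ = 1 ∨ σ = -1)
    (b : ℕ) (h0 : σ * V (b - 1) ≤ 0) :
    ∀ j : ℕ, j ≤ b → 2 * (σ * (S b - S (b - j))) ≤ j * ((j : ℤ) - 1) := by
  intro j
  induction j with
  | zero => simp
  | succ n ih =>
    intro hnb
    have ih' := ih (by omega)
    have hv : σ * V (b - 1 - n) ≤ n := vtsp_vel_down V hV σ hσ (b - 1) h0 n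
    have heq1 : b - n = (b - (n + 1)) + 1 := by omega
    have heq2 : b - 1 - n = b - (n + 1) := by omega
    rw [heq2] at hv
    rw [heq1, hSV (b - (n + 1))] at ih'
    push_cast
    push_cast at ih' hv
    nlinarith

lemma vtsp_interval (S V : ℕ → ℤ) (hSV : ∀ t, S (t + 1) = S t + V t)
    (hV : ∀ t, |V (t + 1) - V t| ≤ 1) (σ : ℤ) (hσ : σ = 1 ∨ σ = -1)
    (a b : ℕ) (hab : a < b) (h0 : σ * V a ≤ 1) (h1 : σ * V (b - 1) ≤ 0) :
    4 * (σ * (S b - S a)) ≤ ((b - a : ℕ) : ℤ) ^ 2 := by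
  set T := b - a with hT
  set m := T / 2 with hm
  have h2 := vtsp_pos_up S V hSV hV σ hσ a h0 m
  have h3 := vtsp_pos_down S V hSV hV σ hσ b h1 (T - m) (by omega)
  have heq : b - (T - m) = a + m := by omega
  rw [heq] at h3
  have hTm : ((T - m : ℕ) : ℤ) = (T : ℤ) - (m : ℤ) := by
    have : m ≤ T := by omega
    push_cast [this]
    ring
  rw [hTm] at h3
  have hcase : (T : ℤ) = 2 * (m : ℤ) ∨ (T : ℤ) = 2 * (m : ℤ) + 1 := by
    have : T = 2 * m ∨ T = 2 * m + 1 := by omega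
    rcases this with h | h <;> [left; right] <;> exact_mod_cast congrArg (Nat.cast : ℕ → ℤ) h
  rcases hcase with h | h <;> rw [h] <;> nlinarith [h2, h3]

theorem vtsp_main (k : ℕ) (S V : ℕ → ℤ) (hSV : ∀ t, S (t + 1) = S t + V t)
    (hV : ∀ t, |V (t + 1) - V t| ≤ 1) (hV0 : |V 0| ≤ 1) (hVlast : V (k - 1) = 0)
    (hk : 0 < k) (r : ℕ) (hr : 1 ≤ r) (W : ℕ → ℤ) (hW0 : W 0 = 0) (hS0 : S 0 = 0)
    (Tt : ℕ → ℕ) (hT_mono : ∀ i j, i ≤ j → Tt i ≤ Tt j) (hTk : ∀ i, r < i → Tt i = k)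
    (hSW : ∀ i, i ≤ r → S (Tt i) = W i)
    (hwne : ∀ i, i < r → W (i + 1) ≠ W i)
    (halt : ∀ i, i + 2 ≤ r → (W (i + 1) - W i) * (W (i + 2) - W (i + 1)) < 0) :
    (∑ j ∈ Finset.range r, ⌈2 * Real.sqrt ((|W (j + 1) - W j| : ℤ) : ℝ)⌉₊) ≤ k := by
  classical
  set sg : ℕ → ℤ := fun i => if 0 < W (i + 1) - W i then 1 else -1 with hsgdef
  have hsg : ∀ i, sg i = 1 ∨ sg i = -1 := by
    intro i
    simp only [hsgdef]
    split <;> simp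
  have hd_pos : ∀ i, i < r → 0 < sg i * (W (i + 1) - W i) := by
    intro i hi
    have hne := hwne i hi
    simp only [hsgdef]
    split
    · linarith
    · rename_i h
      have : W (i + 1) - W i < 0 := by
        rcases lt_trichotomy (W (i + 1) - W i) 0 with h' | h' | h'
        · exact h'
        · exact absurd (by linarith : W (i + 1) = W i) hne
        · exact absurd h' h
      linarith
  have hd_abs : ∀ i, i < r → sg i * (W (i + 1) - W i) = |W (i + 1) - W i| := by
    intro i hi
    rcases hsg i with h | h <;> rw [h]
    · rw [one_mul, abs_of_pos]
      have := hd_pos i hi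
      rw [h, one_mul] at this
      exact this
    · have := hd_pos i hi
      rw [h] at this
      rw [abs_of_neg (by linarith)]
      ring
  have hsg_alt : ∀ i, i + 2 ≤ r → sg (i + 1) = -sg i := by
    intro i hi
    have h := halt i hi
    simp only [hsgdef]
    split <;> split <;> rename_i h1 h2
    · exfalso
      nlinarith
    · norm_num
    · norm_num
    · exfalso
      have h1' : W (i + 1 + 1) - W (i + 1) < 0 := by
        have hne := hwne (i + 1) (by omega)
        rcases lt_trichotomy (W (i + 1 + 1) - W (i + 1)) 0 with h' | h' | h'
        · exact h'
        · exact absurd (by linarith : W (i + 1 + 1) = W (i + 1)) hne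
        · exact absurd h' h1
      have h2' : W (i + 1) - W i < 0 := by
        have hne := hwne i (by omega)
        rcases lt_trichotomy (W (i + 1) - W i) 0 with h' | h' | h'
        · exact h'
        · exact absurd (by linarith : W (i + 1) = W i) hne
        · exact absurd h' h2
      rw [show i + 1 + 1 = i + 2 from by omega] at h1'
      have := mul_pos_of_neg_of_neg h2' h1'
      linarith
  -- main induction
  have main : ∀ i, i ≤ r → ∃ a : ℕ, a ≤ Tt (i + 1) ∧
      (∑ j ∈ Finset.range i, ⌈2 * Real.sqrt ((|W (j + 1) - W j| : ℤ) : ℝ)⌉₊) ≤ a ∧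
      (i < r → sg i * S a ≤ sg i * W i ∧ sg i * V a ≤ 1) := by
    intro i
    induction i with
    | zero =>
      intro _
      refine ⟨0, Nat.zero_le _, by simp, fun _ => ⟨?_, ?_⟩⟩
      · rw [hS0, hW0]
      · calc sg 0 * V 0 ≤ |V 0| := vtsp_mul_abs _ _ (hsg 0)
          _ ≤ 1 := hV0
    | succ n ih =>
      intro hn1
      obtain ⟨a, haT, hasum, hinv⟩ := ih (by omega)
      obtain ⟨hS_a, hV_a⟩ := hinv (by omega)
      have hae : a ≤ Tt (n + 2) := le_trans haT (hT_mono _ _ (by omega))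
      obtain ⟨b, hab', hbe, hmax, hstrict⟩ :=
        vtsp_last_argmax (fun x => sg n * S x) a (Tt (n + 2)) hae
      replace hmax : ∀ y, a ≤ y → y ≤ Tt (n + 2) → sg n * S y ≤ sg n * S b := hmax
      replace hstrict : ∀ y, b < y → y ≤ Tt (n + 2) → sg n * S y < sg n * S b := hstrict
      have hb1 : sg n * W (n + 1) ≤ sg n * S b := by
        have := hmax (Tt (n + 1)) haT (hT_mono _ _ (by omega))
        rwa [hSW (n + 1) (by omega)] at this
      have hdpos := hd_pos n (by omega)
      have hWlt : sg n * W n < sg n * W (n + 1) := by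
        have := mul_sub (sg n) (W (n + 1)) (W n)
        linarith
      have haltb : a < b := by
        have h5 : sg n * S a < sg n * S b := by linarith
        rcases lt_or_eq_of_le hab' with h | h
        · exact h
        · exfalso; rw [h] at h5; exact lt_irrefl _ h5
      have hVb : sg n * V (b - 1) ≤ 0 := by
        by_cases hbk : b < Tt (n + 2)
        · have hstep := hstrict (b + 1) (by omega) (by omega)
          rw [hSV b] at hstep
          have hVb0 : sg n * V b < 0 := by
            have := mul_add (sg n) (S b) (V b)
            linarith
          have hVb' : sg n * V b ≤ -1 := by omega
          have hd := hV (b - 1)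
          rw [show b - 1 + 1 = b from by omega] at hd
          have h1 := vtsp_mul_abs (sg n) (V (b - 1) - V b) (hsg n)
          have h2 : |V (b - 1) - V b| = |V b - V (b - 1)| := abs_sub_comm _ _
          have := mul_sub (sg n) (V (b - 1)) (V b)
          linarith
        · have hbe2 : b = Tt (n + 2) := by omega
          by_cases hnr : n + 2 ≤ r
          · exfalso
            have hsalt := hsg_alt n hnr
            have hd2 := hd_pos (n + 1) (by omega)
            rw [show n + 1 + 1 = n + 2 from by omega, hsalt, neg_mul] at hd2
            have hW2 : sg n * W (n + 2) < sg n * W (n + 1) := by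
              have := mul_sub (sg n) (W (n + 2)) (W (n + 1))
              linarith
            have hSb : S b = W (n + 2) := by rw [hbe2]; exact hSW (n + 2) hnr
            rw [hSb] at hb1
            linarith
          · have hbk' : b = k := by
              rw [hbe2]
              exact hTk (n + 2) (by omega)
            rw [hbk', hVlast, mul_zero]
      have hintv : 4 * (sg n * (W (n + 1) - W n)) ≤ ((b - a : ℕ) : ℤ) ^ 2 := by
        have h4 := vtsp_interval S V hSV hV (sg n) (hsg n) a b haltb hV_a hVb
        have hdisp : sg n * (W (n + 1) - W n) ≤ sg n * (S b - S a) := by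
          have e1 := mul_sub (sg n) (W (n + 1)) (W n)
          have e2 := mul_sub (sg n) (S b) (S a)
          linarith
        linarith
      have hceil : ⌈2 * Real.sqrt ((|W (n + 1) - W n| : ℤ) : ℝ)⌉₊ ≤ b - a := by
        apply vtsp_ceil_sqrt_le _ (abs_nonneg _)
        rw [← hd_abs n (by omega)]
        exact hintv
      refine ⟨b, hbe, ?_, ?_⟩
      · rw [Finset.sum_range_succ]
        omega
      · intro hlt
        have hsalt : sg (n + 1) = -sg n := hsg_alt n (by omega)
        constructor
        · rw [hsalt]
          have e1 := neg_mul (sg n) (S b)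
          have e2 := neg_mul (sg n) (W (n + 1))
          linarith
        · have hmx := hmax (b - 1) (by omega) (by omega)
          have hsb : S b = S (b - 1) + V (b - 1) := by
            conv_lhs => rw [show b = (b - 1) + 1 from by omega]
            exact hSV (b - 1)
          have hVb1 : 0 ≤ sg n * V (b - 1) := by
            have e1 : sg n * S b = sg n * (S (b - 1) + V (b - 1)) := by rw [← hsb]
            have e2 := mul_add (sg n) (S (b - 1)) (V (b - 1))
            linarith
          have hd := hV (b - 1)
          rw [show b - 1 + 1 = b from by omega] at hd
          have h1 := vtsp_mul_abs (sg n) (V (b - 1) - V b) (hsg n)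
          have h2 : |V (b - 1) - V b| = |V b - V (b - 1)| := abs_sub_comm _ _
          rw [hsalt]
          have e1 := mul_sub (sg n) (V (b - 1)) (V b)
          have e2 := neg_mul (sg n) (V b)
          linarith
  obtain ⟨a, haT, hsum, _⟩ := main r le_rfl
  have hTrk : Tt (r + 1) = k := hTk (r + 1) (by omega)
  omega

/-- Unidimensional turning-point lower bound: if a rest-to-rest 1D vector
sequence of `k` vectors visits, in order, targets `w 0 = 0, w 1, …, w r` that
strictly alternate direction, then
`k ≥ ∑_{i<r} ⌈2√(|w (i+1) - w i|)⌉`. -/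
theorem vtsp_turning_point_lower_bound (k : ℕ) (v : Fin k → ℤ)
    (hv0 : ∀ h : 0 < k, |v ⟨0, h⟩| ≤ 1 ∧ v ⟨k - 1, Nat.sub_lt h one_pos⟩ = 0)
    (hv : ∀ (i : ℕ) (h : i + 1 < k), |v ⟨i + 1, h⟩ - v ⟨i, by omega⟩| ≤ 1)
    (s : Fin (k + 1) → ℤ) (hs0 : s 0 = 0)
    (hs : ∀ t : Fin k, s t.succ = s t.castSucc + v t)
    (r : ℕ) (hr : 1 ≤ r) (w : Fin (r + 1) → ℤ) (hw0 : w 0 = 0)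
    (hwne : ∀ (i : ℕ) (h : i < r), w ⟨i + 1, by omega⟩ ≠ w ⟨i, by omega⟩)
    (halt : ∀ (i : ℕ) (h : i + 2 ≤ r),
      (w ⟨i + 1, by omega⟩ - w ⟨i, by omega⟩) *
        (w ⟨i + 2, by omega⟩ - w ⟨i + 1, by omega⟩) < 0)
    (τ : Fin (r + 1) → Fin (k + 1)) (hτ : Monotone τ) (hτ0 : τ 0 = 0)
    (hτw : ∀ i : Fin (r + 1), s (τ i) = w i) :
    (∑ i : Fin r,
        ⌈2 * Real.sqrt ((|w i.succ - w i.castSucc| : ℤ) : ℝ)⌉₊) ≤ k := by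
  classical
  have hk : 0 < k := by
    by_contra hkc
    have hk0 : k = 0 := by omega
    subst hk0
    have h1 : τ ⟨1, by omega⟩ = τ 0 := by
      apply Fin.ext
      omega
    have h2 := hτw ⟨1, by omega⟩
    rw [h1, hτ0, hs0] at h2
    have h3 := hwne 0 hr
    have h4 : (⟨0, by omega⟩ : Fin (r + 1)) = 0 := rfl
    rw [h4, hw0] at h3
    have h5 : (⟨0 + 1, by omega⟩ : Fin (r + 1)) = ⟨1, by omega⟩ := rfl
    exact h3 (by rw [h5, ← h2])
  let S : ℕ → ℤ := fun t => s ⟨min t k, Nat.lt_succ_of_le (min_le_right t k)⟩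
  let V : ℕ → ℤ := fun t => if h : t < k then v ⟨t, h⟩ else 0
  let W : ℕ → ℤ := fun i => w ⟨min i r, Nat.lt_succ_of_le (min_le_right i r)⟩
  let Tt : ℕ → ℕ := fun i => if h : i ≤ r then (τ ⟨i, Nat.lt_succ_of_le h⟩ : ℕ) else k
  have hWw : ∀ (j : ℕ) (h : j ≤ r), W j = w ⟨j, Nat.lt_succ_of_le h⟩ := by
    intro j h
    show w _ = w _
    congr 1
    exact Fin.ext (min_eq_left h)
  have hVlast : V (k - 1) = 0 := by
    show (if h : k - 1 < k then v ⟨k - 1, h⟩ else 0) = 0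
    rw [dif_pos (show k - 1 < k by omega)]
    have := (hv0 hk).2
    convert this using 2
  have hSV : ∀ t, S (t + 1) = S t + V t := by
    intro t
    by_cases ht : t < k
    · have h1 : min (t + 1) k = t + 1 := by omega
      have h2 : min t k = t := by omega
      show s ⟨min (t+1) k, _⟩ = s ⟨min t k, _⟩ + (if h : t < k then v ⟨t, h⟩ else 0)
      rw [dif_pos ht]
      have e1 : (⟨min (t+1) k, Nat.lt_succ_of_le (min_le_right _ k)⟩ : Fin (k + 1)) = (⟨t, ht⟩ : Fin k).succ :=
        Fin.ext (by simp [h1, Fin.succ])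
      have e2 : (⟨min t k, Nat.lt_succ_of_le (min_le_right _ k)⟩ : Fin (k + 1)) = (⟨t, ht⟩ : Fin k).castSucc :=
        Fin.ext (by simp [h2, Fin.castSucc])
      rw [e1, e2, hs ⟨t, ht⟩]
    · have h1 : min (t + 1) k = k := by omega
      have h2 : min t k = k := by omega
      show s ⟨min (t+1) k, _⟩ = s ⟨min t k, _⟩ + (if h : t < k then v ⟨t, h⟩ else 0)
      rw [dif_neg ht]
      have e1 : (⟨min (t+1) k, Nat.lt_succ_of_le (min_le_right _ k)⟩ : Fin (k + 1)) =
          (⟨min t k, Nat.lt_succ_of_le (min_le_right _ k)⟩ : Fin (k + 1)) :=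
        Fin.ext (by simp [h1, h2])
      rw [e1]
      ring
  have hV1 : ∀ t, |V (t + 1) - V t| ≤ 1 := by
    intro t
    by_cases h1 : t + 1 < k
    · show |(if h : t + 1 < k then v ⟨t+1, h⟩ else 0) - (if h : t < k then v ⟨t, h⟩ else 0)| ≤ 1
      rw [dif_pos h1, dif_pos (show t < k by omega)]
      exact hv t h1
    · by_cases h2 : t < k
      · show |(if h : t + 1 < k then v ⟨t+1, h⟩ else 0) - (if h : t < k then v ⟨t, h⟩ else 0)| ≤ 1
        rw [dif_pos h2, dif_neg h1]
        have ht : t = k - 1 := by omega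
        subst ht
        have hz : v ⟨k - 1, h2⟩ = 0 := (hv0 hk).2
        rw [hz]
        simp
      · show |(if h : t + 1 < k then v ⟨t+1, h⟩ else 0) - (if h : t < k then v ⟨t, h⟩ else 0)| ≤ 1
        rw [dif_neg h1, dif_neg h2]
        simp
  have hV0 : |V 0| ≤ 1 := by
    show |if h : 0 < k then v ⟨0, h⟩ else 0| ≤ 1
    rw [dif_pos hk]
    exact (hv0 hk).1
  have hS0 : S 0 = 0 := by
    show s ⟨min 0 k, _⟩ = 0
    have : (⟨min 0 k, Nat.lt_succ_of_le (min_le_right 0 k)⟩ : Fin (k + 1)) = 0 :=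
      Fin.ext (by simp)
    rw [this, hs0]
  have hW0 : W 0 = 0 := by
    rw [hWw 0 (by omega)]
    have : (⟨0, Nat.lt_succ_of_le (by omega)⟩ : Fin (r + 1)) = 0 := rfl
    rw [this, hw0]
  have hSW : ∀ (i : ℕ), i ≤ r → S (Tt i) = W i := by
    intro i hi
    show S (if h : i ≤ r then (τ ⟨i, Nat.lt_succ_of_le h⟩ : ℕ) else k) = W i
    rw [dif_pos hi]
    show s ⟨min _ k, _⟩ = W i
    have h2 : (⟨min ((τ ⟨i, Nat.lt_succ_of_le hi⟩ : Fin (k+1)) : ℕ) k,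
        Nat.lt_succ_of_le (min_le_right _ k)⟩ : Fin (k + 1)) =
        τ ⟨i, Nat.lt_succ_of_le hi⟩ :=
      Fin.ext (min_eq_left (Nat.lt_succ_iff.mp (τ ⟨i, Nat.lt_succ_of_le hi⟩).isLt))
    rw [h2, hτw ⟨i, Nat.lt_succ_of_le hi⟩, hWw i hi]
  have hTt_mono : ∀ i j, i ≤ j → Tt i ≤ Tt j := by
    intro i j hij
    show (if h : i ≤ r then (τ ⟨i, Nat.lt_succ_of_le h⟩ : ℕ) else k) ≤
      (if h : j ≤ r then (τ ⟨j, Nat.lt_succ_of_le h⟩ : ℕ) else k)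
    by_cases hi : i ≤ r
    · by_cases hj : j ≤ r
      · rw [dif_pos hi, dif_pos hj]
        exact hτ (show (⟨i, Nat.lt_succ_of_le hi⟩ : Fin (r+1)) ≤ ⟨j, Nat.lt_succ_of_le hj⟩ from hij)
      · rw [dif_pos hi, dif_neg hj]
        exact Nat.lt_succ_iff.mp (τ _).isLt
    · rw [dif_neg hi, dif_neg (show ¬ j ≤ r by omega)]
  have hTk : ∀ i, r < i → Tt i = k := by
    intro i hi
    show (if h : i ≤ r then (τ ⟨i, Nat.lt_succ_of_le h⟩ : ℕ) else k) = k
    rw [dif_neg (by omega)]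
  have hwne' : ∀ i, i < r → W (i + 1) ≠ W i := by
    intro i hi
    rw [hWw (i+1) (by omega), hWw i (by omega)]
    exact fun h => hwne i hi h
  have halt' : ∀ i, i + 2 ≤ r → (W (i + 1) - W i) * (W (i + 2) - W (i + 1)) < 0 := by
    intro i hi
    rw [hWw (i+1) (by omega), hWw i (by omega), hWw (i+2) (by omega)]
    exact halt i hi
  have key := vtsp_main k S V hSV hV1 hV0 hVlast hk r hr W hW0 hS0 Tt hTt_mono hTk hSW hwne' halt'
  calc (∑ i : Fin r, ⌈2 * Real.sqrt ((|w i.succ - w i.castSucc| : ℤ) : ℝ)⌉₊)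
      = ∑ i : Fin r, ⌈2 * Real.sqrt ((|W ((i : ℕ) + 1) - W (i : ℕ)| : ℤ) : ℝ)⌉₊ := by
        refine Finset.sum_congr rfl fun i _ => ?_
        have e1 : w i.succ = W ((i : ℕ) + 1) := by
          rw [hWw ((i : ℕ) + 1) (by omega)]
          exact congrArg w (Fin.ext rfl)
        have e2 : w i.castSucc = W (i : ℕ) := by
          rw [hWw (i : ℕ) (by omega)]
          exact congrArg w (Fin.ext rfl)
        rw [e1, e2]
    _ = ∑ j ∈ Finset.range r, ⌈2 * Real.sqrt ((|W (j + 1) - W j| : ℤ) : ℝ)⌉₊ :=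
        Fin.sum_univ_eq_sum_range (fun j => ⌈2 * Real.sqrt ((|W (j + 1) - W j| : ℤ) : ℝ)⌉₊) r
    _ ≤ k := key
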